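/- arXiv:2204.05037 — 4 statements merged into one kernel-verified Lean document; each statement's English description precedes it below -/
import Mathlib

section
/- Let f(X) = c·X + b be a univariate linear integer polynomial coprime to N, let m > 1 be an integer, and let x be uniform on {0, 1, ..., m-1}. Then the probability that f(x) ≡ 0 (mod N) is at most 1/N + 1/m. -/
/-- For a univariate linear polynomial `f(X) = c·X + b` coprime to `N`, and `x`
uniform on `{0, ..., m-1}`, the probability that `f(x) ≡ 0 (mod N)` is at most
`1/N + 1/m`. -/
theorem stmt1 (c b : ℤ) (N m : ℕ) (hN : 0 < N) (hm : 1 < m)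
    (hcop : Int.gcd (Int.gcd c b) (N : ℤ) = 1) :
    (((Finset.range m).filter (fun x : ℕ => (c * (x : ℤ) + b) % (N : ℤ) = 0)).card : ℝ) / m
      ≤ 1 / N + 1 / m := by
  set S := (Finset.range m).filter (fun x : ℕ => (c * (x : ℤ) + b) % (N : ℤ) = 0) with hSdef
  have hmR : (0:ℝ) < m := by exact_mod_cast Nat.lt_of_lt_of_le Nat.zero_lt_one hm.le
  have hNR : (0:ℝ) < N := by exact_mod_cast hN
  rcases S.eq_empty_or_nonempty with h | ⟨x0, hx0⟩
  · rw [h]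
    simp only [Finset.card_empty, Nat.cast_zero, zero_div]
    positivity
  · -- a solution exists, so gcd c N = 1
    have hx0' := Finset.mem_filter.mp hx0
    have hdvd : (N:ℤ) ∣ c * (x0:ℤ) + b := Int.dvd_of_emod_eq_zero hx0'.2
    have hg : Int.gcd c (N:ℤ) = 1 := by
      have hc : (Int.gcd c (N:ℤ) : ℤ) ∣ c := Int.gcd_dvd_left _ _
      have hNd : (Int.gcd c (N:ℤ) : ℤ) ∣ (N:ℤ) := Int.gcd_dvd_right _ _
      have hb : (Int.gcd c (N:ℤ) : ℤ) ∣ b := by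
        have h1 : (Int.gcd c (N:ℤ) : ℤ) ∣ c * (x0:ℤ) + b := hNd.trans hdvd
        have h2 := h1.sub (hc.mul_right (x0:ℤ))
        simpa using h2
      have h3 : (Int.gcd c (N:ℤ) : ℤ) ∣ (Int.gcd (Int.gcd c b) (N:ℤ) : ℤ) :=
        Int.dvd_coe_gcd (Int.dvd_coe_gcd hc hb) hNd
      rw [hcop] at h3
      exact_mod_cast Int.eq_one_of_dvd_one (by positivity) h3
    -- c is invertible mod N: get u with c * u = 1 in ZMod N
    obtain ⟨u, v, huv⟩ := Int.isCoprime_iff_gcd_eq_one.mpr hg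
    have hcu : (c : ZMod N) * (u : ZMod N) = 1 := by
      have : ((u * c + v * N : ℤ) : ZMod N) = ((1:ℤ) : ZMod N) := by rw [huv]
      push_cast at this
      simp only [ZMod.natCast_self, mul_zero, add_zero] at this
      linear_combination this
    -- all elements of S are congruent mod N
    have key : ∀ x ∈ S, ∀ y ∈ S, (x : ZMod N) = (y : ZMod N) := by
      intro x hx y hy
      have hx2 := (Finset.mem_filter.mp hx).2
      have hy2 := (Finset.mem_filter.mp hy).2
      have hx3 : ((c * (x:ℤ) + b : ℤ) : ZMod N) = 0 := by
        rw [ZMod.intCast_zmod_eq_zero_iff_dvd]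
        exact_mod_cast Int.dvd_of_emod_eq_zero hx2
      have hy3 : ((c * (y:ℤ) + b : ℤ) : ZMod N) = 0 := by
        rw [ZMod.intCast_zmod_eq_zero_iff_dvd]
        exact_mod_cast Int.dvd_of_emod_eq_zero hy2
      push_cast at hx3 hy3
      have hcxy : (c : ZMod N) * (x : ZMod N) = (c : ZMod N) * (y : ZMod N) := by
        linear_combination hx3 - hy3
      calc (x : ZMod N) = (u:ZMod N) * ((c:ZMod N) * x) := by
            rw [← mul_assoc, mul_comm (u:ZMod N), hcu, one_mul]
        _ = (u:ZMod N) * ((c:ZMod N) * y) := by rw [hcxy]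
        _ = (y : ZMod N) := by rw [← mul_assoc, mul_comm (u:ZMod N), hcu, one_mul]
    -- count: injection x ↦ x / N into range (m / N + 1)
    have hcard : S.card ≤ m / N + 1 := by
      have hle := Finset.card_le_card_of_injOn (s := S) (t := Finset.range (m / N + 1)) (fun x => x / N)
        (fun a ha => by
          have : a < m := Finset.mem_range.mp (Finset.mem_filter.mp ha).1
          exact Finset.mem_range.mpr (Nat.lt_succ_of_le (Nat.div_le_div_right this.le)))
        (fun x hx y hy hxy => by
          have h1 := key x hx y hy
          have h2 : x % N = y % N := (ZMod.natCast_eq_natCast_iff _ _ _).mp h1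
          have hxy' : x / N = y / N := hxy
          have hdx := Nat.div_add_mod x N
          have hdy := Nat.div_add_mod y N
          rw [hxy', h2] at hdx
          omega)
      exact (hle).trans_eq (Finset.card_range _)
    -- real arithmetic
    have h1 : (S.card : ℝ) ≤ (m / N : ℕ) + 1 := by exact_mod_cast hcard
    have h2 : ((m / N : ℕ) : ℝ) ≤ (m : ℝ) / N := Nat.cast_div_le
    have h3 : (S.card : ℝ) ≤ (m:ℝ)/N + 1 := h1.trans (by linarith)
    calc (S.card : ℝ) / m ≤ ((m:ℝ)/N + 1) / m := by gcongr
      _ = 1 / N + 1 / m := by field_simp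
end

section
/- For all natural numbers k, μ ≥ 1 and real ε ∈ (0,1) with ε·μ ≤ 1/2, the regularized beta function satisfies I_ε(k, μ) ≤ (ε·μ)^k, where I_ε(k, μ) = (1-ε)^μ · Σ_{j=k}^∞ C(μ+j-1, j) ε^j. -/
/-- The regularized incomplete beta function at integer parameters:
`I_ε(k, μ) = (1-ε)^μ · Σ_{j≥k} C(μ+j-1, j) ε^j`. -/
noncomputable def Ireg (ε : ℝ) (k μ : ℕ) : ℝ :=
  (1 - ε) ^ μ * ∑' j : ℕ, if k ≤ j then ((μ + j - 1).choose j : ℝ) * ε ^ j else 0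

lemma choose_le_pow_aux (ν : ℕ) : ∀ k, (ν + k).choose k ≤ (ν + 1) ^ k := by
  intro k
  induction k with
  | zero => simp
  | succ k ih =>
    rw [show ν + (k + 1) = ν + k + 1 from by omega]
    have key : (ν + k + 1).choose (k + 1) * (k + 1) = (ν + k + 1) * (ν + k).choose k := by
      have h := Nat.add_one_mul_choose_eq (ν + k) k
      exact h.symm
    have h1 : (ν + k + 1).choose (k + 1) * (k + 1) ≤ (ν + 1) ^ (k + 1) * (k + 1) := by
      calc (ν + k + 1).choose (k + 1) * (k + 1) = (ν + k + 1) * (ν + k).choose k := key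
        _ ≤ (ν + k + 1) * (ν + 1) ^ k := Nat.mul_le_mul_left _ ih
        _ ≤ ((ν + 1) * (k + 1)) * (ν + 1) ^ k := by
            apply Nat.mul_le_mul_right
            nlinarith
        _ = (ν + 1) ^ (k + 1) * (k + 1) := by ring
    exact Nat.le_of_mul_le_mul_right h1 (by omega)

lemma one_sub_pow_le (μ : ℕ) (hμ : 1 ≤ μ) (ε : ℝ) (hε0 : 0 < ε) (hε1 : ε < 1)
    (h : ε * μ ≤ 1 / 2) : (1 - ε) ^ μ ≤ 1 - ε * (μ + 1) / 2 := by
  induction μ with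
  | zero => omega
  | succ n ih =>
    rcases Nat.eq_zero_or_pos n with hn | hn
    · subst hn; norm_num
    · have hn1 : ε * n ≤ 1 / 2 := by
        have : (n : ℝ) ≤ (n : ℝ) + 1 := by linarith
        push_cast at h ⊢
        nlinarith
      have ihn := ih hn hn1
      have hεn1 : ε * ((n : ℝ) + 1) ≤ 1 / 2 := by push_cast at h; linarith
      have h1ε : (0 : ℝ) ≤ 1 - ε := by linarith
      calc (1 - ε) ^ (n + 1) = (1 - ε) ^ n * (1 - ε) := by ring
        _ ≤ (1 - ε * (n + 1) / 2) * (1 - ε) := by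
            apply mul_le_mul_of_nonneg_right ihn h1ε
        _ ≤ 1 - ε * ((n : ℝ) + 1 + 1) / 2 := by nlinarith
        _ = 1 - ε * ((↑(n + 1) : ℝ) + 1) / 2 := by push_cast; ring

/-- For `k, μ ≥ 1` and `ε ∈ (0,1)` with `ε·μ ≤ 1/2`: `I_ε(k, μ) ≤ (ε·μ)^k`. -/
theorem stmt4 (k μn : ℕ) (hk : 1 ≤ k) (hμ : 1 ≤ μn) (ε : ℝ)
    (hε : ε ∈ Set.Ioo (0 : ℝ) 1) (hεμ : ε * μn ≤ 1 / 2) :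
    Ireg ε k μn ≤ (ε * μn) ^ k := by
  obtain ⟨hε0, hε1⟩ := hε
  set ν := μn - 1 with hν
  have hμν : μn = ν + 1 := by omega
  set a : ℕ → ℝ := fun j => ((ν + j).choose j : ℝ) * ε ^ j with ha
  set r : ℝ := ε * (μn + 1) / 2 with hr
  have hμR : (1 : ℝ) ≤ (μn : ℝ) := by exact_mod_cast hμ
  have hεhalf : ε ≤ 1 / 2 := by nlinarith
  have hr0 : 0 < r := by
    apply div_pos (mul_pos hε0 (by positivity)) (by norm_num)
  have hr_half : r ≤ 1 / 2 + ε / 2 := by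
    rw [hr]; nlinarith
  have hr1 : r < 1 := by linarith
  have ha_nonneg : ∀ j, 0 ≤ a j := by
    intro j; apply mul_nonneg (Nat.cast_nonneg _) (by positivity)
  -- recurrence: a (j+1) * (j+1) = (ν + j + 1) * ε * a j
  have hrec : ∀ j : ℕ, a (j + 1) * ((j : ℝ) + 1) = ((ν : ℝ) + j + 1) * ε * a j := by
    intro j
    have key : (ν + j + 1).choose (j + 1) * (j + 1) = (ν + j + 1) * (ν + j).choose j := by
      have h := Nat.add_one_mul_choose_eq (ν + j) j
      exact h.symm
    have keyR : ((ν + j + 1).choose (j + 1) : ℝ) * ((j : ℝ) + 1)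
        = ((ν : ℝ) + j + 1) * ((ν + j).choose j : ℝ) := by exact_mod_cast key
    simp only [ha, show ν + (j + 1) = ν + j + 1 from by omega]
    calc ((ν + j + 1).choose (j + 1) : ℝ) * ε ^ (j + 1) * ((j : ℝ) + 1)
        = (((ν + j + 1).choose (j + 1) : ℝ) * ((j : ℝ) + 1)) * (ε ^ j * ε) := by ring
      _ = (((ν : ℝ) + j + 1) * ((ν + j).choose j : ℝ)) * (ε ^ j * ε) := by rw [keyR]
      _ = ((ν : ℝ) + j + 1) * ε * (((ν + j).choose j : ℝ) * ε ^ j) := by ring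
  -- step bound for j ≥ 1
  have hstep : ∀ j : ℕ, 1 ≤ j → a (j + 1) ≤ r * a j := by
    intro j hj
    have hjR : (1 : ℝ) ≤ (j : ℝ) := by exact_mod_cast hj
    have hj1 : (0 : ℝ) < (j : ℝ) + 1 := by linarith
    have hkey : ((ν : ℝ) + j + 1) * ε * a j ≤ r * a j * ((j : ℝ) + 1) := by
      have hcoef : ((ν : ℝ) + j + 1) * ε ≤ r * ((j : ℝ) + 1) := by
        rw [hr]
        have hνR : (ν : ℝ) + 1 = (μn : ℝ) := by
          rw [hμν]; push_cast; ring
        nlinarith [mul_nonneg (sub_nonneg.mpr hμR) (sub_nonneg.mpr hjR), hε0.le]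
      calc ((ν : ℝ) + j + 1) * ε * a j ≤ r * ((j : ℝ) + 1) * a j := by
            apply mul_le_mul_of_nonneg_right hcoef (ha_nonneg j)
        _ = r * a j * ((j : ℝ) + 1) := by ring
    have := hrec j
    nlinarith [this, hkey]
  -- geometric bound from k
  have hgeom : ∀ m : ℕ, a (k + m) ≤ a k * r ^ m := by
    intro m
    induction m with
    | zero => simp
    | succ m ih =>
      have h1 : a (k + m + 1) ≤ r * a (k + m) := hstep (k + m) (by omega)
      calc a (k + (m + 1)) = a (k + m + 1) := by ring_nf
        _ ≤ r * a (k + m) := h1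
        _ ≤ r * (a k * r ^ m) := by
            apply mul_le_mul_of_nonneg_left ih hr0.le
        _ = a k * r ^ (m + 1) := by ring
  -- the summand in Ireg
  set g : ℕ → ℝ := fun j => if k ≤ j then ((μn + j - 1).choose j : ℝ) * ε ^ j else 0 with hg
  have hg_eq : ∀ j, g j = if k ≤ j then a j else 0 := by
    intro j
    have : μn + j - 1 = ν + j := by omega
    simp [hg, ha, this]
  have hg_nonneg : ∀ j, 0 ≤ g j := by
    intro j; rw [hg_eq]; split
    · exact ha_nonneg j
    · exact le_refl 0
  have hgeom_summ : Summable (fun m : ℕ => a k * r ^ m) :=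
    (summable_geometric_of_lt_one hr0.le hr1).mul_left (a k)
  have hshift_summ : Summable (fun m : ℕ => g (m + k)) := by
    apply Summable.of_nonneg_of_le (fun m => hg_nonneg _) _ hgeom_summ
    intro m
    rw [hg_eq, if_pos (by omega : k ≤ m + k)]
    calc a (m + k) = a (k + m) := by rw [add_comm]
      _ ≤ a k * r ^ m := hgeom m
  have hg_summ : Summable g := (summable_nat_add_iff k).mp hshift_summ
  have hsum_split : (∑ i ∈ Finset.range k, g i) + ∑' m, g (m + k) = ∑' j, g j :=
    Summable.sum_add_tsum_nat_add k hg_summ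
  have hrange0 : (∑ i ∈ Finset.range k, g i) = 0 := by
    apply Finset.sum_eq_zero; intro i hi
    rw [hg_eq, if_neg]
    exact not_le.mpr (Finset.mem_range.mp hi)
  have htail_le : (∑' m, g (m + k)) ≤ a k * (1 - r)⁻¹ := by
    have h1 : (∑' m, g (m + k)) ≤ ∑' m : ℕ, a k * r ^ m := by
      apply Summable.tsum_le_tsum _ hshift_summ hgeom_summ
      intro m
      rw [hg_eq, if_pos (by omega : k ≤ m + k)]
      calc a (m + k) = a (k + m) := by rw [add_comm]
        _ ≤ a k * r ^ m := hgeom m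
    rwa [tsum_mul_left, tsum_geometric_of_lt_one hr0.le hr1] at h1
  have hS : (∑' j, g j) ≤ a k * (1 - r)⁻¹ := by
    rw [← hsum_split, hrange0, zero_add]; exact htail_le
  have hSnonneg : 0 ≤ ∑' j, g j := tsum_nonneg hg_nonneg
  have h1r : (0 : ℝ) < 1 - r := by linarith
  have hpow : (1 - ε) ^ μn ≤ 1 - r := by
    rw [hr]; exact one_sub_pow_le μn hμ ε hε0 hε1 hεμ
  have hchoose : ((ν + k).choose k : ℝ) ≤ (μn : ℝ) ^ k := by
    have h := choose_le_pow_aux ν k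
    have : ((ν + k).choose k : ℝ) ≤ ((ν + 1 : ℕ) : ℝ) ^ k := by exact_mod_cast h
    rwa [show ((ν + 1 : ℕ) : ℝ) = (μn : ℝ) by rw [hμν]] at this
  have hak : a k ≤ (ε * μn) ^ k := by
    simp only [ha]
    calc ((ν + k).choose k : ℝ) * ε ^ k ≤ (μn : ℝ) ^ k * ε ^ k :=
          mul_le_mul_of_nonneg_right hchoose (by positivity)
      _ = (ε * μn) ^ k := by rw [mul_pow]; ring
  have hIreg : Ireg ε k μn = (1 - ε) ^ μn * ∑' j, g j := by
    rw [Ireg]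
  rw [hIreg]
  calc (1 - ε) ^ μn * ∑' j, g j ≤ (1 - r) * ∑' j, g j :=
        mul_le_mul_of_nonneg_right hpow hSnonneg
    _ ≤ (1 - r) * (a k * (1 - r)⁻¹) := mul_le_mul_of_nonneg_left hS h1r.le
    _ = a k := by field_simp
    _ ≤ (ε * μn) ^ k := hak
end

section
/- For all natural numbers μ ≥ 1, k ≥ 2μ, and real ε ∈ (0, 1/2], the regularized beta function satisfies I_ε(k, μ) ≤ ε^k · k^μ. -/
lemma aux_pow32 (m : ℕ) : (3/2 : ℝ) ^ m ≤ 2 * (Nat.factorial m : ℝ) := by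
  induction m with
  | zero => norm_num
  | succ m ih =>
    rcases Nat.eq_zero_or_pos m with hm | hm
    · subst hm; norm_num
    · have h1 : (3/2 : ℝ) ^ (m+1) = (3/2) * (3/2)^m := by ring
      have h2 : (Nat.factorial (m+1) : ℝ) = (m+1) * (Nat.factorial m : ℝ) := by
        push_cast [Nat.factorial_succ]; ring
      have hm1 : (1 : ℝ) ≤ (m : ℝ) := by exact_mod_cast hm
      have hf : (0:ℝ) ≤ (Nat.factorial m : ℝ) := by positivity
      nlinarith [ih]

/-- For `μ ≥ 1`, `k ≥ 2μ`, and `ε ∈ (0, 1/2]`: `I_ε(k, μ) ≤ ε^k · k^μ`. -/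
theorem stmt5 (k μn : ℕ) (hμ : 1 ≤ μn) (hk : 2 * μn ≤ k) (ε : ℝ)
    (hε : ε ∈ Set.Ioc (0 : ℝ) (1 / 2)) :
    Ireg ε k μn ≤ ε ^ k * (k : ℝ) ^ μn := by
  obtain ⟨hε0, hε2⟩ := hε
  have hk2 : 2 ≤ k := le_trans (by omega) hk
  set r : ℝ := 3/2 * ε with hrdef
  have hr0 : (0:ℝ) ≤ r := by positivity
  have hr1 : r < 1 := by rw [hrdef]; linarith
  set a : ℕ → ℝ := fun j => ((μn + j - 1).choose j : ℝ) * ε ^ j with ha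
  have ha_nonneg : ∀ j, 0 ≤ a j := fun j => by positivity
  -- ratio step
  have hratio : ∀ j, k ≤ j → a (j+1) ≤ r * a j := by
    intro j hj
    have h1 : μn + j - 1 + 1 = μn + j := by omega
    have hid : (μn + j) * ((μn + j - 1).choose j) = (μn + j).choose (j+1) * (j+1) := by
      have := Nat.add_one_mul_choose_eq (μn + j - 1) j
      rwa [h1] at this
    have hc : 2 * ((μn + j).choose (j+1)) ≤ 3 * ((μn + j - 1).choose j) := by
      have h2 : 2 * ((μn + j).choose (j+1)) * (j+1) ≤ 3 * ((μn + j - 1).choose j) * (j+1) := by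
        calc 2 * ((μn + j).choose (j+1)) * (j+1)
            = 2 * ((μn + j).choose (j+1) * (j+1)) := by ring
          _ = 2 * ((μn + j) * ((μn + j - 1).choose j)) := by rw [hid]
          _ ≤ 3 * (j+1) * ((μn + j - 1).choose j) := by
              have : 2 * (μn + j) ≤ 3 * (j + 1) := by omega
              calc 2 * ((μn + j) * ((μn + j - 1).choose j))
                  = (2 * (μn + j)) * ((μn + j - 1).choose j) := by ring
                _ ≤ (3 * (j+1)) * ((μn + j - 1).choose j) :=
                    Nat.mul_le_mul_right _ this
          _ = 3 * ((μn + j - 1).choose j) * (j+1) := by ring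
      exact Nat.le_of_mul_le_mul_right h2 (Nat.succ_pos j)
    have hcR : 2 * (((μn + j).choose (j+1) : ℝ)) ≤ 3 * (((μn + j - 1).choose j : ℝ)) := by
      exact_mod_cast hc
    have h3 : μn + (j+1) - 1 = μn + j := by omega
    show ((μn + (j+1) - 1).choose (j+1) : ℝ) * ε ^ (j+1) ≤ r * (((μn + j - 1).choose j : ℝ) * ε ^ j)
    rw [h3, hrdef]
    have hpj : (0:ℝ) ≤ ε ^ j := by positivity
    have : ε ^ (j+1) = ε ^ j * ε := by ring
    rw [this]
    nlinarith [mul_le_mul_of_nonneg_right hcR (mul_nonneg hpj hε0.le)]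
  -- geometric domination
  have hgeom : ∀ n, a (n + k) ≤ a k * r ^ n := by
    intro n
    induction n with
    | zero => simp
    | succ n ih =>
      have : n + 1 + k = (n + k) + 1 := by omega
      rw [this]
      calc a ((n + k) + 1) ≤ r * a (n + k) := hratio _ (by omega)
        _ ≤ r * (a k * r ^ n) := by
            exact mul_le_mul_of_nonneg_left ih hr0
        _ = a k * r ^ (n+1) := by ring
  set f : ℕ → ℝ := fun j => if k ≤ j then a j else 0 with hf
  have hf_nonneg : ∀ j, 0 ≤ f j := by
    intro j
    by_cases h : k ≤ j <;> simp [hf, h, ha_nonneg j]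
  have hsum_shift : Summable (fun n => f (n + k)) := by
    apply Summable.of_nonneg_of_le (fun n => hf_nonneg _) (fun n => ?_)
      ((summable_geometric_of_lt_one hr0 hr1).mul_left (a k))
    simp only [hf, if_pos (Nat.le_add_left k n)]
    exact hgeom n
  have hsumf : Summable f := (summable_nat_add_iff k).mp hsum_shift
  have htsum : (∑' j, f j) ≤ a k * (1 - r)⁻¹ := by
    have h0 : (∑ i ∈ Finset.range k, f i) = 0 := by
      apply Finset.sum_eq_zero
      intro i hi
      have hik : ¬ k ≤ i := by
        have := Finset.mem_range.mp hi; omega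
      simp [hf, hik]
    calc (∑' j, f j) = (∑ i ∈ Finset.range k, f i) + ∑' n, f (n + k) :=
          (Summable.sum_add_tsum_nat_add k hsumf).symm
      _ = ∑' n, f (n + k) := by rw [h0, zero_add]
      _ ≤ ∑' n, a k * r ^ n := by
          apply Summable.tsum_le_tsum _ hsum_shift ((summable_geometric_of_lt_one hr0 hr1).mul_left (a k))
          intro n
          simp only [hf, if_pos (Nat.le_add_left k n)]
          exact hgeom n
      _ = a k * (1 - r)⁻¹ := by
          rw [tsum_mul_left, tsum_geometric_of_lt_one hr0 hr1]
  -- now bound a k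
  have hak : a k = ((μn + k - 1).choose k : ℝ) * ε ^ k := rfl
  have hr1' : (0:ℝ) < 1 - r := by linarith
  have hpow_nonneg : (0:ℝ) ≤ (1 - ε) ^ μn := pow_nonneg (by linarith) _
  have hmain : Ireg ε k μn ≤ (1 - ε) ^ μn * (a k * (1 - r)⁻¹) := by
    unfold Ireg
    exact mul_le_mul_of_nonneg_left htsum hpow_nonneg
  have hεk : (0:ℝ) < ε ^ k := by positivity
  rcases eq_or_lt_of_le hμ with hμ1 | hμ2
  · -- μn = 1
    have hμn : μn = 1 := hμ1.symm
    subst hμn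
    have hC : (1 + k - 1).choose k = 1 := by
      have : 1 + k - 1 = k := by omega
      rw [this, Nat.choose_self]
    have : a k = ε ^ k := by rw [hak, hC]; simp
    rw [this] at hmain
    have hfac : (1 - ε) * (1 - r)⁻¹ ≤ 2 := by
      rw [mul_inv_le_iff₀ hr1', hrdef]
      linarith
    have hk2R : (2:ℝ) ≤ (k:ℝ) := by exact_mod_cast hk2
    calc Ireg ε k 1 ≤ (1 - ε) ^ 1 * (ε ^ k * (1 - r)⁻¹) := hmain
      _ = ((1 - ε) * (1 - r)⁻¹) * ε ^ k := by ring
      _ ≤ 2 * ε ^ k := mul_le_mul_of_nonneg_right hfac hεk.le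
      _ ≤ (k:ℝ) * ε ^ k := mul_le_mul_of_nonneg_right hk2R hεk.le
      _ = ε ^ k * (k:ℝ) ^ 1 := by ring
  · -- μn ≥ 2
    have hμ2' : 2 ≤ μn := hμ2
    have hk4 : 4 ≤ k := by omega
    have hε1 : (0:ℝ) ≤ 1 - ε := by linarith
    have hfac : (1 - ε) ^ μn * (1 - r)⁻¹ ≤ 1 := by
      have h1 : (1 - ε) ^ μn ≤ (1 - ε) ^ 2 :=
        pow_le_pow_of_le_one hε1 (by linarith) hμ2'
      have h2 : (1 - ε) ^ 2 ≤ 1 - r := by rw [hrdef]; nlinarith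
      rw [mul_inv_le_iff₀ hr1', one_mul]
      linarith
    have hfac0 : 0 ≤ (1 - ε) ^ μn * (1 - r)⁻¹ := mul_nonneg hpow_nonneg (by positivity)
    -- bound the binomial coefficient
    have hsymm : (μn + k - 1).choose (μn - 1) = (μn + k - 1).choose k := by
      have h1 : k ≤ μn + k - 1 := by omega
      have h2 : μn + k - 1 - k = μn - 1 := by omega
      rw [← h2]
      exact Nat.choose_symm h1
    set F : ℝ := (Nat.factorial (μn - 1) : ℝ) with hF
    have hF0 : (0:ℝ) < F := by positivity
    have hCb : ((μn + k - 1).choose k : ℝ) ≤ (k:ℝ) ^ μn := by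
      rw [← hsymm]
      have h1 : ((μn + k - 1).choose (μn - 1) : ℝ) ≤ ((μn + k - 1 : ℕ) : ℝ) ^ (μn - 1) / F :=
        Nat.choose_le_pow_div (μn - 1) (μn + k - 1)
      have hkR : (0:ℝ) ≤ (k:ℝ) := Nat.cast_nonneg k
      have h2 : ((μn + k - 1 : ℕ) : ℝ) ≤ 3/2 * (k:ℝ) := by
        have : (2 * (μn + k - 1) : ℕ) ≤ 3 * k := by omega
        have := (Nat.cast_le (α := ℝ)).mpr this
        push_cast at this ⊢
        linarith
      have h3 : ((μn + k - 1 : ℕ) : ℝ) ^ (μn - 1) ≤ (3/2 * (k:ℝ)) ^ (μn - 1) :=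
        pow_le_pow_left₀ (Nat.cast_nonneg _) h2 _
      have h4 : (3/2 * (k:ℝ)) ^ (μn - 1) = (3/2:ℝ) ^ (μn - 1) * (k:ℝ) ^ (μn - 1) :=
        mul_pow _ _ _
      have h5 : (3/2:ℝ) ^ (μn - 1) ≤ 2 * F := aux_pow32 (μn - 1)
      have hkp : (0:ℝ) ≤ (k:ℝ) ^ (μn - 1) := by positivity
      have h6 : ((μn + k - 1 : ℕ) : ℝ) ^ (μn - 1) / F ≤ 2 * (k:ℝ) ^ (μn - 1) := by
        rw [div_le_iff₀ hF0]
        calc ((μn + k - 1 : ℕ) : ℝ) ^ (μn - 1) ≤ (3/2:ℝ) ^ (μn - 1) * (k:ℝ) ^ (μn - 1) := by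
              rw [← h4]; exact h3
          _ ≤ (2 * F) * (k:ℝ) ^ (μn - 1) := mul_le_mul_of_nonneg_right h5 hkp
          _ = 2 * (k:ℝ) ^ (μn - 1) * F := by ring
      have h7 : 2 * (k:ℝ) ^ (μn - 1) ≤ (k:ℝ) ^ μn := by
        have hkR4 : (2:ℝ) ≤ (k:ℝ) := by exact_mod_cast hk2
        have : (k:ℝ) ^ μn = (k:ℝ) * (k:ℝ) ^ (μn - 1) := by
          rw [← pow_succ']
          congr 1
          omega
        rw [this]
        exact mul_le_mul_of_nonneg_right hkR4 hkp
      linarith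
    calc Ireg ε k μn ≤ (1 - ε) ^ μn * (((μn + k - 1).choose k : ℝ) * ε ^ k * (1 - r)⁻¹) := hmain
      _ = ((1 - ε) ^ μn * (1 - r)⁻¹) * (((μn + k - 1).choose k : ℝ) * ε ^ k) := by ring
      _ ≤ 1 * (((μn + k - 1).choose k : ℝ) * ε ^ k) :=
          mul_le_mul_of_nonneg_right hfac (by positivity)
      _ = ((μn + k - 1).choose k : ℝ) * ε ^ k := by rw [one_mul]
      _ ≤ (k:ℝ) ^ μn * ε ^ k := mul_le_mul_of_nonneg_right hCb hεk.le
      _ = ε ^ k * (k:ℝ) ^ μn := by ring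
end

section
/- Define weight_{μ,ε}(p,r) = r(log₂ p − log₂ μ) if p ≥ μ^{1+ε}; = r·log₂ p − μ·log₂ r if p < μ^{1+ε} and r > 2(1+ε)·μ·ln μ/ln p; and = 0 otherwise. For every prime p, integer μ ≥ 2, and ε ≥ log_μ(2), the function r ↦ weight_{μ,ε}(p,r) is non-decreasing on r ≥ 1. -/
set_option maxHeartbeats 1000000


/-- The weight function `weight_{μ,ε}(p,r)` from the inverse LCSZ analysis. -/
noncomputable def weightFn (μ ε : ℝ) (p : ℕ) (r : ℕ) : ℝ :=
  if μ ^ (1 + ε) ≤ (p : ℝ) then (r : ℝ) * (Real.logb 2 p - Real.logb 2 μ)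
  else if 2 * (1 + ε) * μ * Real.log μ / Real.log p < (r : ℝ) then
    (r : ℝ) * Real.logb 2 p - μ * Real.logb 2 r
  else 0

/-- For every prime `p`, integer `μ ≥ 2`, and `ε ≥ log_μ(2)`, the weight
`r ↦ weight_{μ,ε}(p,r)` is non-decreasing on `r ≥ 1`. -/
theorem stmt13 (μn : ℕ) (hμ : 2 ≤ μn) (ε : ℝ) (hε : Real.logb μn 2 ≤ ε)
    (p : ℕ) (hp : p.Prime) :
    ∀ r s : ℕ, 1 ≤ r → r ≤ s → weightFn (μn : ℝ) ε p r ≤ weightFn (μn : ℝ) ε p s := by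
  intro r s _ hrs
  set μ : ℝ := (μn : ℝ) with hμdef
  have hμ2 : (2:ℝ) ≤ μ := by rw [hμdef]; exact_mod_cast hμ
  have hμ1 : (1:ℝ) < μ := by linarith
  have hlogμ : 0 < Real.log μ := Real.log_pos hμ1
  have hp2 : (2:ℝ) ≤ (p:ℝ) := by exact_mod_cast hp.two_le
  have hlogp : 0 < Real.log p := Real.log_pos (by linarith)
  have hlog2 : (1:ℝ)/2 < Real.log 2 := by
    have := Real.log_two_gt_d9; linarith
  have hlog2' : Real.log 2 < 1 := by
    have := Real.log_two_lt_d9; linarith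
  have hba : Real.log 2 ≤ Real.log μ := Real.log_le_log (by norm_num) hμ2
  have hlogμ2 : (1:ℝ)/2 < Real.log μ := lt_of_lt_of_le hlog2 hba
  have hε' : Real.log 2 / Real.log μ ≤ ε := by
    rwa [Real.logb] at hε
  have hε0 : 0 < ε := lt_of_lt_of_le (by positivity) hε'
  have hrs' : (r:ℝ) ≤ s := by exact_mod_cast hrs
  unfold weightFn
  by_cases hA : μ ^ (1 + ε) ≤ (p : ℝ)
  · rw [if_pos hA, if_pos hA]
    have hμp : μ ≤ (p:ℝ) := by
      calc μ = μ ^ (1:ℝ) := (Real.rpow_one μ).symm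
        _ ≤ μ ^ (1 + ε) := Real.rpow_le_rpow_of_exponent_le hμ1.le (by linarith)
        _ ≤ (p:ℝ) := hA
    have hcoef : 0 ≤ Real.logb 2 p - Real.logb 2 μ := by
      have := (Real.logb_le_logb one_lt_two (by linarith : (0:ℝ) < μ)
        (by linarith : (0:ℝ) < (p:ℝ))).2 hμp
      linarith
    exact mul_le_mul_of_nonneg_right hrs' hcoef
  · rw [if_neg hA, if_neg hA]
    set T := 2 * (1 + ε) * μ * Real.log μ / Real.log (p:ℝ) with hTdef
    have hnum : 0 < 2 * (1 + ε) * μ * Real.log μ := by positivity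
    have hT0 : 0 < T := div_pos hnum hlogp
    have hTc : μ / Real.log p < T := by
      rw [hTdef, div_lt_div_iff_of_pos_right hlogp]
      have hμ0 : (0:ℝ) < μ := by linarith
      nlinarith [mul_lt_mul_of_pos_left hlogμ2 hμ0, mul_pos hε0 (mul_pos hμ0 hlogμ)]
    set f : ℝ → ℝ := fun x => x * Real.log p - μ * Real.log x with hfdef
    have hmono : StrictMonoOn f (Set.Ici T) := by
      apply strictMonoOn_of_deriv_pos (convex_Ici T)
      · apply ContinuousOn.sub
        · exact (continuous_id.mul continuous_const).continuousOn
        · apply continuousOn_const.mul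
          apply Real.continuousOn_log.mono
          intro x hx
          simp only [Set.mem_compl_iff, Set.mem_singleton_iff]
          exact ne_of_gt (lt_of_lt_of_le hT0 hx)
      · intro x hx
        rw [interior_Ici] at hx
        have hx0 : 0 < x := lt_trans hT0 hx
        have hd : HasDerivAt f (Real.log p - μ * x⁻¹) x := by
          have h := ((hasDerivAt_id x).mul_const (Real.log (p:ℝ))).sub
            ((Real.hasDerivAt_log (ne_of_gt hx0)).const_mul μ)
          simp only [one_mul] at h
          exact h
        rw [hd.deriv]
        have hμx : μ / x < Real.log p := by
          rw [div_lt_iff₀ hx0]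
          have : μ / Real.log p < x := lt_trans hTc hx
          rw [div_lt_iff₀ hlogp] at this
          linarith
        rw [div_eq_mul_inv] at hμx
        linarith
    have hfT : 0 ≤ f T := by
      have hTlogp : T * Real.log p = 2 * (1 + ε) * μ * Real.log μ :=
        div_mul_cancel₀ _ (ne_of_gt hlogp)
      have hlogT : Real.log T = Real.log 2 + Real.log (1 + ε) + Real.log μ
          + Real.log (Real.log μ) - Real.log (Real.log p) := by
        rw [hTdef, Real.log_div (ne_of_gt hnum) (ne_of_gt hlogp),
          Real.log_mul (by positivity) (ne_of_gt hlogμ),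
          Real.log_mul (by positivity) (by linarith : μ ≠ 0),
          Real.log_mul (by norm_num) (by positivity)]
      have hb1 : Real.log (1 + ε) ≤ ε := by
        have := Real.log_le_sub_one_of_pos (by linarith : (0:ℝ) < 1 + ε)
        linarith
      have hb2 : Real.log (Real.log μ) ≤ Real.log μ - 1 :=
        Real.log_le_sub_one_of_pos hlogμ
      have hb3 : Real.log (Real.log 2) ≤ Real.log (Real.log p) :=
        Real.log_le_log (by linarith) (Real.log_le_log (by norm_num) hp2)
      have hb4 : -Real.log 2 ≤ Real.log (Real.log 2) := by
        have h1 : Real.log (2:ℝ)⁻¹ ≤ Real.log (Real.log 2) :=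
          Real.log_le_log (by norm_num) (by rw [show ((2:ℝ))⁻¹ = 1/2 by norm_num]; linarith)
        rwa [Real.log_inv] at h1
      have hεμ : Real.log 2 ≤ ε * Real.log μ := (div_le_iff₀ hlogμ).1 hε'
      have hq : Real.log 2 / Real.log μ ≤ 1 := by
        rw [div_le_one hlogμ]; exact hba
      have hqa : Real.log 2 / Real.log μ * Real.log μ = Real.log 2 :=
        div_mul_cancel₀ _ (ne_of_gt hlogμ)
      have hkey : 0 ≤ (ε - Real.log 2 / Real.log μ) * (2 * Real.log μ - 1) :=
        mul_nonneg (by linarith) (by linarith)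
      have hmain : Real.log T ≤ 2 * (1 + ε) * Real.log μ := by
        rw [hlogT]
        nlinarith [hkey, hqa, hq, hb1, hb2, hb3, hb4]
      have h2 : μ * Real.log T ≤ μ * (2 * (1 + ε) * Real.log μ) :=
        mul_le_mul_of_nonneg_left hmain (by linarith)
      have h3 : μ * (2 * (1 + ε) * Real.log μ) = 2 * (1 + ε) * μ * Real.log μ := by ring
      show 0 ≤ T * Real.log (p:ℝ) - μ * Real.log T
      rw [hTlogp]
      linarith
    have hform : ∀ n : ℕ, (n:ℝ) * Real.logb 2 p - μ * Real.logb 2 n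
        = f n / Real.log 2 := by
      intro n
      simp only [hfdef, Real.logb]
      ring
    by_cases hr : T < (r:ℝ)
    · have hs : T < (s:ℝ) := lt_of_lt_of_le hr hrs'
      rw [if_pos hr, if_pos hs, hform r, hform s]
      have hle : f r ≤ f s :=
        hmono.monotoneOn (Set.mem_Ici.2 hr.le) (Set.mem_Ici.2 hs.le) hrs'
      have hl2 : (0:ℝ) < Real.log 2 := by linarith
      exact (div_le_div_iff_of_pos_right hl2).2 hle
    · rw [if_neg hr]
      by_cases hs : T < (s:ℝ)
      · rw [if_pos hs, hform s]
        have h4 := hmono (Set.mem_Ici.2 le_rfl) (Set.mem_Ici.2 hs.le) hs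
        have h5 : (0:ℝ) ≤ f s := by linarith [hfT]
        exact div_nonneg h5 (by linarith)
      · rw [if_neg hs]
end
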